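/- Fix integers 0 < n₁ ≤ n₂ ≤ … ≤ n_m. For every n̄-admissible composition d̄ ∈ Z_{≥0}^m there exists a DL-dense array R on Y_n̄ such that hor(R) = hb(d̄). -/

import Mathlib

/-- A composition of length `nn` is encoded as a function `ℕ → ℕ` vanishing from
index `nn` on (0-based indexing).  `IsSerpentine nn d lam mu` says that
`mu ∈ Ser^nn_{d,lam}` is a `d`-serpentine associated with `lam`. -/
def IsSerpentine (nn d : ℕ) (lam mu : ℕ → ℕ) : Prop :=
  (∀ i, nn ≤ i → lam i = 0) ∧
  (∀ i, nn ≤ i → mu i = 0) ∧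
  (∀ i, lam i ≤ mu i) ∧
  (∑ i ∈ Finset.range nn, (mu i - lam i)) = d ∧
  (∀ i j, i < j → j < nn → lam i ≤ lam j → mu i ≤ lam j) ∧
  (∀ i j, i < j → j < nn → lam j < lam i → lam i ≤ mu j → mu i = lam i)

/-- `domSum f s` is the sum of the `s` largest entries of a (finitely supported)
function `f : ℕ → ℕ`, i.e. the `s`-th partial sum of the dominant part `f₊`. -/
noncomputable def domSum (f : ℕ → ℕ) (s : ℕ) : ℕ :=
  sSup ((fun T : Finset ℕ => ∑ i ∈ T, f i) '' {T : Finset ℕ | T.card ≤ s})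

/-- `f₊ = g₊`: the dominant parts (non-increasing reorderings, padded by trailing
zeros) of the finitely supported functions `f` and `g` coincide. -/
def DomEq (f g : ℕ → ℕ) : Prop := ∀ s, domSum f s = domSum g s

/-- `f₊ ≤ g₊` in the dominance order: `|f| = |g|` and every partial sum of the
dominant part of `g` is at least the corresponding one for `f`. -/
def DomLE (f g : ℕ → ℕ) : Prop :=
  (∀ s, domSum f s ≤ domSum g s) ∧ ∃ N, ∀ s, N ≤ s → domSum f s = domSum g s

/-- The composition `(λ, d)`: append the entry `d` to a length-`n` composition. -/
def appendComp (n : ℕ) (lam : ℕ → ℕ) (d : ℕ) : ℕ → ℕ :=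
  fun i => if i < n then lam i else if i = n then d else 0

/-- The composition `(d₁, …, d_m)`: truncate `d` to its first `m` entries. -/
def truncComp (m : ℕ) (d : ℕ → ℕ) : ℕ → ℕ := fun i => if i < m then d i else 0

/-- A chain of iterated serpentines `μ⁽⁰⁾ = (0)`, `μ⁽ʲ⁾ ∈ Ser^{n_j}_{d_j, μ⁽ʲ⁻¹⁾}`. -/
def SerpChain (n : ℕ → ℕ) (m : ℕ) (d : ℕ → ℕ) (μ : ℕ → ℕ → ℕ) : Prop :=
  (∀ i, μ 0 i = 0) ∧ ∀ j, j < m → IsSerpentine (n j) (d j) (μ j) (μ (j + 1))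

/-- `d̄ ∈ Z_{≥0}^m` is `n̄`-admissible: for each `s < m` the number of nonzero
entries among `d_0, …, d_s` is at most `n_s`. -/
def NAdmissible (n : ℕ → ℕ) (m : ℕ) (d : ℕ → ℕ) : Prop :=
  ∀ s, s < m → ((Finset.range (s + 1)).filter (fun j => d j ≠ 0)).card ≤ n s

/-- Cells are pairs `(i, j)` (row `i`, column `j`, both 0-based); the Young diagram
`Y_n̄` consists of the cells with `j < m` and `i < n j`.  `IsSCorner n m Rr Rc c`
says that, after removing the rows in `Rr` and the columns in `Rc` from `Y_n̄`,
the cell `c` is a corner of the remaining (renumbered) Young diagram: it is the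
lowest remaining cell of its column and the leftmost remaining cell of its row. -/
def IsSCorner (n : ℕ → ℕ) (m : ℕ) (Rr Rc : Set ℕ) (c : ℕ × ℕ) : Prop :=
  c.2 < m ∧ c.1 < n c.2 ∧ c.1 ∉ Rr ∧ c.2 ∉ Rc ∧
  (∀ i, c.1 < i → i < n c.2 → i ∈ Rr) ∧
  (∀ j, j < c.2 → j ∉ Rc → n j ≤ c.1)

/-- An execution of the thin-hook removal process on `Y_n̄`: a list of cells, each
of which is a corner of the diagram remaining after deleting the rows and columns
of the previously recorded cells, such that at the end every cell of `Y_n̄` lies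
in a removed row or in a removed column (the diagram is empty). -/
def IsExec (n : ℕ → ℕ) (m : ℕ) (l : List (ℕ × ℕ)) : Prop :=
  (∀ t (ht : t < l.length),
    IsSCorner n m {i | ∃ c ∈ l.take t, c.1 = i} {j | ∃ c ∈ l.take t, c.2 = j}
      (l.get ⟨t, ht⟩)) ∧
  (∀ i j, j < m → i < n j → (∃ c ∈ l, c.1 = i) ∨ (∃ c ∈ l, c.2 = j))

/-- `S` is the set of staircase corners of `Y_n̄`: the recorded set of some
execution of the thin-hook removal process. -/
def IsScSet (n : ℕ → ℕ) (m : ℕ) (S : Set (ℕ × ℕ)) : Prop :=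
  ∃ l : List (ℕ × ℕ), IsExec n m l ∧ S = {c | c ∈ l}

/-- The partial order on staircase corners: `(i,j) ⪯ (i',j')` iff `i ≤ i'` and
`j' ≤ j` (to increase, move down and to the left). -/
def ScLE (c c' : ℕ × ℕ) : Prop := c.1 ≤ c'.1 ∧ c'.2 ≤ c.2

/-- A DL-dense array: an array supported on the staircase corners `S` which is
order-preserving for the staircase-corner order. -/
def DLDense (S : Set (ℕ × ℕ)) (R : ℕ × ℕ → ℕ) : Prop :=
  (∀ c, c ∉ S → R c = 0) ∧ ∀ c c', c ∈ S → c' ∈ S → ScLE c c' → R c ≤ R c'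

/-- Vertical weight of an array: the sum of the entries in column `j`. -/
def vrtW (n : ℕ → ℕ) (R : ℕ × ℕ → ℕ) (j : ℕ) : ℕ := ∑ i ∈ Finset.range (n j), R (i, j)

/-- Horizontal weight of an array: the sum of the entries in row `i`. -/
def horW (m : ℕ) (R : ℕ × ℕ → ℕ) (i : ℕ) : ℕ := ∑ j ∈ Finset.range m, R (i, j)

/-! The array puts `hb(d̄)ᵢ` on the staircase corner of row `i`. A serpentine step in column
`j` can only raise rows holding a corner in some column `≤ j` (condition (iii) caps every other
row of column `j` by an empty row below it), so `hb(d̄)` vanishes on corner-free rows and the row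
sums come out right. For corners `(i, j) ≺ (i', j')` row `i` is still empty before step `j`,
and from then on condition (iii) preserves `μᵢ ≤ μᵢ'`, because row `i'` lies in every later
column; this is DL-density. -/

namespace IsExec

variable {n : ℕ → ℕ} {m : ℕ} {l : List (ℕ × ℕ)}

theorem isSCorner (h : IsExec n m l) (t : ℕ) (ht : t < l.length) :
    IsSCorner n m {i | ∃ c ∈ l.take t, c.1 = i} {j | ∃ c ∈ l.take t, c.2 = j} l[t] :=
  h.1 t ht

theorem mem_diagram (h : IsExec n m l) {c : ℕ × ℕ} (hc : c ∈ l) : c.2 < m ∧ c.1 < n c.2 := by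
  obtain ⟨t, ht, rfl⟩ := List.mem_iff_getElem.mp hc
  exact ⟨(h.isSCorner t ht).1, (h.isSCorner t ht).2.1⟩

theorem fst_getElem_ne_of_lt (h : IsExec n m l) {s t : ℕ} (hst : s < t) (ht : t < l.length) :
    l[s].1 ≠ l[t].1 :=
  fun hs => (h.isSCorner t ht).2.2.1 ⟨l[s], List.mem_take_iff_getElem.mpr ⟨s, by omega, rfl⟩, hs⟩

theorem snd_getElem_ne_of_lt (h : IsExec n m l) {s t : ℕ} (hst : s < t) (ht : t < l.length) :
    l[s].2 ≠ l[t].2 :=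
  fun hs => (h.isSCorner t ht).2.2.2.1
    ⟨l[s], List.mem_take_iff_getElem.mpr ⟨s, by omega, rfl⟩, hs⟩

theorem snd_getElem_inj (h : IsExec n m l) {s t : ℕ} (hs : s < l.length) (ht : t < l.length) :
    l[s].2 = l[t].2 ↔ s = t := by
  refine ⟨fun hst => ?_, fun hst => by subst hst; rfl⟩
  rcases lt_trichotomy s t with hlt | heq | hgt
  · exact absurd hst (h.snd_getElem_ne_of_lt hlt ht)
  · exact heq
  · exact absurd hst.symm (h.snd_getElem_ne_of_lt hgt hs)

theorem injOn_fst (h : IsExec n m l) : Set.InjOn Prod.fst {c | c ∈ l} := by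
  rintro _ hc _ hc' hcc'
  obtain ⟨s, hs, rfl⟩ := List.mem_iff_getElem.mp hc
  obtain ⟨t, ht, rfl⟩ := List.mem_iff_getElem.mp hc'
  rcases lt_trichotomy s t with hlt | rfl | hgt
  · exact absurd hcc' (h.fst_getElem_ne_of_lt hlt ht)
  · rfl
  · exact absurd hcc'.symm (h.fst_getElem_ne_of_lt hgt hs)

theorem injOn_snd (h : IsExec n m l) : Set.InjOn Prod.snd {c | c ∈ l} := by
  rintro _ hc _ hc' hcc'
  obtain ⟨s, hs, rfl⟩ := List.mem_iff_getElem.mp hc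
  obtain ⟨t, ht, rfl⟩ := List.mem_iff_getElem.mp hc'
  obtain rfl := (h.snd_getElem_inj hs ht).mp hcc'
  rfl

/-- `l[t]` is leftmost in its row when recorded, so a column `j < l[t].2` not yet removed must end
above it. -/
theorem le_fst_getElem (h : IsExec n m l) {t j : ℕ} (ht : t < l.length) (hj : j < l[t].2)
    (hcol : ∀ s (hs : s < l.length), l[s].2 = j → t ≤ s) : n j ≤ l[t].1 := by
  refine (h.isSCorner t ht).2.2.2.2.2 j hj ?_
  rintro ⟨c, hc, rfl⟩
  obtain ⟨s, hs, rfl⟩ := List.mem_take_iff_getElem.mp hc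
  have := hcol s (by omega) rfl
  omega

theorem exists_mem_snd_eq_and_le_fst (h : IsExec n m l) {i j : ℕ} (hj : j < m) (hi : i < n j)
    (hrow : ∀ c ∈ l, c.1 = i → j ≤ c.2) : ∃ c ∈ l, c.2 = j ∧ i ≤ c.1 := by
  by_cases hcol : ∃ c ∈ l, c.2 = j
  · obtain ⟨_, hc, rfl⟩ := hcol
    obtain ⟨t, ht, rfl⟩ := List.mem_iff_getElem.mp hc
    refine ⟨l[t], hc, rfl, le_of_not_gt fun hlt => ?_⟩
    obtain ⟨_, he, rfl⟩ := (h.isSCorner t ht).2.2.2.2.1 i hlt hi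
    obtain ⟨s, hs, rfl⟩ := List.mem_take_iff_getElem.mp he
    have hst : s < t := by omega
    have hlt' : l[t].2 < l[s].2 :=
      lt_of_le_of_ne (hrow _ (List.getElem_mem _) rfl) (h.snd_getElem_ne_of_lt hst ht).symm
    have := h.le_fst_getElem (t := s) (by omega) hlt' fun u hu hut => by
      rw [(h.snd_getElem_inj hu ht).mp hut]; omega
    omega
  · push Not at hcol
    exfalso
    obtain ⟨c, hc, rfl⟩ | ⟨c, hc, hcj⟩ := h.2 i j hj hi
    · obtain ⟨t, ht, rfl⟩ := List.mem_iff_getElem.mp hc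
      have hlt : j < l[t].2 := lt_of_le_of_ne (hrow _ hc rfl) (hcol _ hc).symm
      have := h.le_fst_getElem ht hlt fun s hs hsj => absurd hsj (hcol _ (List.getElem_mem _))
      omega
    · exact hcol c hc hcj

end IsExec

theorem IsSerpentine.le_of_lt {nn d : ℕ} {lam mu : ℕ → ℕ} (h : IsSerpentine nn d lam mu)
    {i j : ℕ} (hij : i < j) (hj : j < nn) (hlam : lam i ≤ lam j) : mu i ≤ mu j :=
  (h.2.2.2.2.1 i j hij hj hlam).trans (h.2.2.1 j)

namespace SerpChain

variable {n : ℕ → ℕ} {m : ℕ} {d : ℕ → ℕ} {μ : ℕ → ℕ → ℕ}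

theorem le_of_le (h : SerpChain n m d μ) {a b s u : ℕ} (hab : a < b) (hsu : s ≤ u) (hum : u ≤ m)
    (hb : ∀ v, s ≤ v → v < u → b < n v) (hs : μ s a ≤ μ s b) : μ u a ≤ μ u b := by
  induction u, hsu using Nat.le_induction with
  | base => exact hs
  | succ u hsu ih =>
    exact (h.2 u (by omega)).le_of_lt hab (hb u hsu (by omega))
      (ih (by omega) fun v hv hvu => hb v hv (by omega))

theorem eq_zero_of_forall_le_snd (h : SerpChain n m d μ) {l : List (ℕ × ℕ)} (hl : IsExec n m l)
    {s : ℕ} (hs : s ≤ m) {i : ℕ} (hrow : ∀ c ∈ l, c.1 = i → s ≤ c.2) : μ s i = 0 := by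
  induction s generalizing i with
  | zero => exact h.1 i
  | succ s ih =>
    obtain ⟨-, hzero, -, -, hcap, -⟩ := h.2 s (by omega)
    by_cases hi : n s ≤ i
    · exact hzero i hi
    obtain ⟨c, hc, hcs, hic⟩ := hl.exists_mem_snd_eq_and_le_fst (by omega) (not_le.mp hi)
      fun c hc hci => by have := hrow c hc hci; omega
    have hic' : i < c.1 := lt_of_le_of_ne hic fun hci => by have := hrow c hc hci.symm; omega
    have hc0 : μ s c.1 = 0 := ih (by omega) fun c' hc' hcc' => by
      rw [hl.injOn_fst hc' hc hcc']; omega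
    have hi0 : μ s i = 0 := ih (by omega) fun c' hc' hci => by have := hrow c' hc' hci; omega
    have := hcap i c.1 hic' (hcs ▸ (hl.mem_diagram hc).2) (by omega)
    omega

theorem le_of_scLE (h : SerpChain n m d μ) {l : List (ℕ × ℕ)} (hl : IsExec n m l)
    (hmono : ∀ j k, j ≤ k → k < m → n j ≤ n k) {c c' : ℕ × ℕ} (hc : c ∈ l) (hc' : c' ∈ l)
    (hcc' : ScLE c c') : μ m c.1 ≤ μ m c'.1 := by
  obtain ⟨hrow, hcol⟩ := hcc'
  rcases hrow.eq_or_lt with hrow | hrow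
  · rw [hrow]
  have hcol : c'.2 < c.2 := hcol.lt_of_ne fun heq => by
    rw [hl.injOn_snd hc' hc heq] at hrow; omega
  have hcm := (hl.mem_diagram hc).1
  have hempty : μ c.2 c.1 = 0 := h.eq_zero_of_forall_le_snd hl hcm.le fun e he hec => by
    rw [hl.injOn_fst he hc hec]
  refine h.le_of_le hrow hcm.le le_rfl (fun v hv hvm => ?_) (by omega)
  exact (hl.mem_diagram hc').2.trans_le (hmono _ _ (by omega) hvm)

end SerpChain

theorem horW_indicator_fst {m : ℕ} {S : Set (ℕ × ℕ)} {w : ℕ → ℕ} (hinj : S.InjOn Prod.fst)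
    (hS : ∀ c ∈ S, c.2 < m) (hw : ∀ i, (∀ c ∈ S, c.1 ≠ i) → w i = 0) (i : ℕ) :
    horW m (S.indicator fun c => w c.1) i = w i := by
  unfold horW
  by_cases hrow : ∃ c ∈ S, c.1 = i
  · obtain ⟨c, hc, rfl⟩ := hrow
    rw [Finset.sum_eq_single_of_mem c.2 (Finset.mem_range.mpr (hS c hc)), Prod.mk.eta,
      Set.indicator_of_mem hc]
    intro j _ hj
    refine Set.indicator_of_notMem (fun hmem => hj ?_) _
    rw [← hinj hmem hc rfl]
  · push Not at hrow
    rw [hw i hrow]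
    exact Finset.sum_eq_zero fun j _ => Set.indicator_of_notMem (fun hmem => hrow _ hmem rfl) _

theorem dlDense_indicator_fst {S : Set (ℕ × ℕ)} {w : ℕ → ℕ}
    (hmono : ∀ c ∈ S, ∀ c' ∈ S, ScLE c c' → w c.1 ≤ w c'.1) :
    DLDense S (S.indicator fun c => w c.1) := by
  refine ⟨fun c hc => Set.indicator_of_notMem hc _, fun c c' hc hc' hcc' => ?_⟩
  rw [Set.indicator_of_mem hc, Set.indicator_of_mem hc']
  exact hmono c hc c' hc' hcc'

theorem hb_is_horizontal_weight_of_dl_dense_general (m : ℕ)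
    (n : ℕ → ℕ)
    (hmono : ∀ j k, j ≤ k → k < m → n j ≤ n k)
    (S : Set (ℕ × ℕ)) (hS : IsScSet n m S)
    (d : ℕ → ℕ)
    (μ : ℕ → ℕ → ℕ) (hchain : SerpChain n m d μ) :
    ∃ R : ℕ × ℕ → ℕ, DLDense S R ∧ ∀ i, horW m R i = μ m i := by
  obtain ⟨l, hl, rfl⟩ := hS
  refine ⟨_, dlDense_indicator_fst fun c hc c' hc' => hchain.le_of_scLE hl hmono hc hc',
    horW_indicator_fst hl.injOn_fst (fun c hc => (hl.mem_diagram hc).1) fun i hi => ?_⟩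
  exact hchain.eq_zero_of_forall_le_snd hl le_rfl fun c hc hci => absurd hci (hi c hc)

/-- Corollary 1.25.  For every `n̄`-admissible composition `d̄`
there is a DL-dense array `R` with `hor(R) = hb(d̄)`.  Here `hb(d̄) = μ⁽ᵐ⁾` for
the unique chain of iterated serpentines with `μ⁽ᵐ⁾₊ = (d₁,…,d_m)₊`. -/
theorem hb_is_horizontal_weight_of_dl_dense (m : ℕ) (hm : 0 < m)
    (n : ℕ → ℕ) (hn0 : 0 < n 0)
    (hmono : ∀ j k, j ≤ k → k < m → n j ≤ n k)
    (S : Set (ℕ × ℕ)) (hS : IsScSet n m S)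
    (d : ℕ → ℕ) (hdsupp : ∀ j, m ≤ j → d j = 0) (hadm : NAdmissible n m d)
    (μ : ℕ → ℕ → ℕ) (hchain : SerpChain n m d μ)
    (hdom : DomEq (μ m) (truncComp m d)) :
    ∃ R : ℕ × ℕ → ℕ, DLDense S R ∧ ∀ i, horW m R i = μ m i :=
  hb_is_horizontal_weight_of_dl_dense_general m n hmono S hS d μ hchain
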